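/- arXiv:2111.12812 — 5 statements merged into one kernel-verified Lean document; each statement's English description precedes it below -/
import Mathlib

section
/- Determinantal Certificate: For f ∈ ℤ_n^{ℤ_n}, one has n = max_{σ ∈ S_n} |{ |σ(f(σ⁻¹(i))) − i| : i ∈ ℤ_n }| if and only if the least common multiple (in the UFD ℚ[x_0,...,x_{n−1}]) of the two polynomials ∏_{0≤i<j<n} (x_j − x_i) and ∏_{0≤i<j<n} ((x_{f(j)} − x_j)² − (x_{f(i)} − x_i)²) does not lie in the ideal J_n generated by the falling factorials (x_k)^↓n, k ∈ ℤ_n. -/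
open Finset MvPolynomial

/-- The maximal number of distinct induced subtractive edge labels
`|σ(f(σ⁻¹(i))) − i|` over all relabelings `σ ∈ S_n`. -/
noncomputable def gapMax (n : ℕ) (f : Fin n → Fin n) : ℕ :=
  Finset.univ.sup fun σ : Equiv.Perm (Fin n) =>
    (Finset.image
      (fun i : Fin n => |((σ (f (σ.symm i)) : ℕ) : ℤ) - ((i : ℕ) : ℤ)|)
      Finset.univ).card

/-- The ideal `J_n` generated by the falling factorials `(x_k)^↓n`. -/
noncomputable def fallingIdeal (n : ℕ) : Ideal (MvPolynomial (Fin n) ℚ) :=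
  Ideal.span (Set.range fun k : Fin n =>
    ∏ i ∈ Finset.range n, (X k - C (i : ℚ)))

/-- The vertex Vandermonde polynomial `∏_{0 ≤ i < j < n} (x_j − x_i)`. -/
noncomputable def vertexVandermonde (n : ℕ) : MvPolynomial (Fin n) ℚ :=
  ∏ p ∈ Finset.univ.filter (fun p : Fin n × Fin n => p.1 < p.2),
    (X p.2 - X p.1)

/-- The edge Vandermonde polynomial
`∏_{0 ≤ i < j < n} ((x_{f(j)} − x_j)² − (x_{f(i)} − x_i)²)`. -/
noncomputable def edgeVandermonde (n : ℕ) (f : Fin n → Fin n) :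
    MvPolynomial (Fin n) ℚ :=
  ∏ p ∈ Finset.univ.filter (fun p : Fin n × Fin n => p.1 < p.2),
    ((X (f p.2) - X p.2) ^ 2 - (X (f p.1) - X p.1) ^ 2)

/-! The maximum `gapMax n f` equals `n` exactly when some bijective labeling `a` makes the edge
labels `|a (f v) - a v|` pairwise distinct, i.e. when the product of the two Vandermonde
polynomials does not vanish at the grid point `a ∈ {0, …, n - 1}ⁿ`. Since `L` divides that product
and is divisible by both factors, this happens exactly when `L` does not vanish at `a`. By Alon's
combinatorial Nullstellensatz, `J_n` consists precisely of the polynomials vanishing on the whole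
grid. -/

theorem MvPolynomial.mem_span_prod_X_sub_C_iff {R σ : Type*} [CommRing R] [IsDomain R]
    [Finite σ] (S : σ → Finset R) (hS : ∀ i, (S i).Nonempty)
    (p : MvPolynomial σ R) :
    p ∈ Ideal.span (Set.range fun i => ∏ r ∈ S i, (X i - C r)) ↔
      ∀ x : σ → R, (∀ i, x i ∈ S i) → eval x p = 0 := by
  constructor
  · intro hp x hx
    suffices Ideal.span _ ≤ RingHom.ker (eval x) from this hp
    refine Ideal.span_le.2 (Set.range_subset_iff.2 fun i => ?_)
    simpa [map_prod] using Finset.prod_eq_zero (hx i) (sub_self (x i))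
  · intro hp
    obtain ⟨h, -, rfl⟩ := combinatorial_nullstellensatz_exists_linearCombination S hS p hp
    rw [Ideal.span, ← Finsupp.range_linearCombination]
    exact LinearMap.mem_range_self _ h

theorem mem_fallingIdeal_iff {n : ℕ} (p : MvPolynomial (Fin n) ℚ) :
    p ∈ fallingIdeal n ↔ ∀ a : Fin n → Fin n, eval (fun k => ((a k : ℕ) : ℚ)) p = 0 := by
  have hgrid : fallingIdeal n = Ideal.span (Set.range fun k : Fin n =>
      ∏ r ∈ (range n).image (Nat.cast : ℕ → ℚ), (X k - C r)) := by
    simp only [fallingIdeal, prod_image fun i _ j _ h => Nat.cast_injective h]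
  have hne (k : Fin n) : ((range n).image (Nat.cast : ℕ → ℚ)).Nonempty :=
    ⟨_, mem_image_of_mem Nat.cast (mem_range.2 k.pos)⟩
  rw [hgrid, mem_span_prod_X_sub_C_iff _ hne]
  constructor
  · exact fun hp a => hp _ fun k => mem_image_of_mem _ (mem_range.2 (a k).isLt)
  · intro hp x hx
    choose a ha hax using fun k => mem_image.1 (hx k)
    obtain rfl : x = fun k => (a k : ℚ) := funext fun k => (hax k).symm
    exact hp fun k => ⟨a k, mem_range.1 (ha k)⟩

theorem map_ne_zero_iff_of_dvd_of_dvd_mul {A K F : Type*} [Monoid A] [MonoidWithZero K]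
    [NoZeroDivisors K] [FunLike F A K] [MulHomClass F A K] (φ : F) {p q l : A} (hp : p ∣ l)
    (hq : q ∣ l) (hl : l ∣ p * q) :
    φ l ≠ 0 ↔ φ p ≠ 0 ∧ φ q ≠ 0 := by
  have hzero {a b : A} (hab : a ∣ b) : φ a = 0 → φ b = 0 :=
    fun h => zero_dvd_iff.1 (h ▸ map_dvd φ hab)
  refine ⟨fun h => ⟨mt (hzero hp) h, mt (hzero hq) h⟩, fun h => mt (hzero hl) ?_⟩
  simpa only [map_mul] using mul_ne_zero h.1 h.2

theorem prod_sub_ne_zero_iff_injective {ι R : Type*} [LinearOrder ι] [Fintype ι] [CommRing R]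
    [IsDomain R] (y : ι → R) :
    ∏ p ∈ univ.filter (fun p : ι × ι => p.1 < p.2), (y p.2 - y p.1) ≠ 0 ↔
      Function.Injective y := by
  rw [prod_ne_zero_iff]
  simp only [mem_filter, mem_univ, true_and, ne_eq, sub_eq_zero, Prod.forall]
  refine ⟨fun h i j hij => ?_, fun h i j hij hyij => hij.ne (h hyij.symm)⟩
  by_contra hne
  rcases lt_or_gt_of_ne hne with hlt | hlt
  · exact h i j hlt hij.symm
  · exact h j i hlt hij

theorem eval_vertexVandermonde_ne_zero_iff {n : ℕ} (x : Fin n → ℚ) :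
    eval x (vertexVandermonde n) ≠ 0 ↔ Function.Injective x := by
  simpa [vertexVandermonde, map_prod] using prod_sub_ne_zero_iff_injective x

theorem eval_edgeVandermonde_ne_zero_iff {n : ℕ} (f : Fin n → Fin n) (x : Fin n → ℚ) :
    eval x (edgeVandermonde n f) ≠ 0 ↔ Function.Injective fun v => (x (f v) - x v) ^ 2 := by
  simpa [edgeVandermonde, map_prod] using
    prod_sub_ne_zero_iff_injective fun v => (x (f v) - x v) ^ 2

def IsGracefulLabeling {n : ℕ} (f a : Fin n → Fin n) : Prop :=
  Function.Injective a ∧ Function.Injective fun v => |((a (f v) : ℕ) : ℤ) - ((a v : ℕ) : ℤ)|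

theorem card_relabeledEdgeLabels_eq_iff {n : ℕ} (f : Fin n → Fin n) (σ : Equiv.Perm (Fin n)) :
    #(univ.image fun i : Fin n => |((σ (f (σ.symm i)) : ℕ) : ℤ) - ((i : ℕ) : ℤ)|) = n ↔
      IsGracefulLabeling f σ := by
  have hrelabel : (univ.image fun i : Fin n => |((σ (f (σ.symm i)) : ℕ) : ℤ) - ((i : ℕ) : ℤ)|) =
      univ.image fun v => |((σ (f v) : ℕ) : ℤ) - ((σ v : ℕ) : ℤ)| := by
    conv_rhs => rw [← image_univ_of_surjective σ.symm.surjective, image_image]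
    simp only [Function.comp_def, Equiv.apply_symm_apply]
  rw [hrelabel, IsGracefulLabeling, and_iff_right σ.injective, ← Set.injOn_univ, ← coe_univ,
    ← card_image_iff, card_fin]

theorem gapMax_le (n : ℕ) (f : Fin n → Fin n) : gapMax n f ≤ n :=
  Finset.sup_le fun _ _ => card_image_le.trans (card_fin n).le

theorem eq_gapMax_iff (n : ℕ) (f : Fin n → Fin n) :
    n = gapMax n f ↔ ∃ a, IsGracefulLabeling f a := by
  constructor
  · intro h
    obtain ⟨σ, -, hσ⟩ := exists_mem_eq_sup univ univ_nonempty fun σ : Equiv.Perm (Fin n) =>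
      #(univ.image fun i : Fin n => |((σ (f (σ.symm i)) : ℕ) : ℤ) - ((i : ℕ) : ℤ)|)
    exact ⟨σ, (card_relabeledEdgeLabels_eq_iff f σ).1 (h.trans hσ).symm⟩
  · rintro ⟨a, ha⟩
    let σ := Equiv.ofBijective a (Finite.injective_iff_bijective.1 ha.1)
    exact le_antisymm (le_sup_of_le (mem_univ σ) ((card_relabeledEdgeLabels_eq_iff f σ).2 ha).ge)
      (gapMax_le n f)

theorem isGracefulLabeling_iff_eval_ne_zero {n : ℕ} (f a : Fin n → Fin n) :
    IsGracefulLabeling f a ↔ eval (fun k => ((a k : ℕ) : ℚ)) (vertexVandermonde n) ≠ 0 ∧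
      eval (fun k => ((a k : ℕ) : ℚ)) (edgeVandermonde n f) ≠ 0 := by
  rw [eval_vertexVandermonde_ne_zero_iff, eval_edgeVandermonde_ne_zero_iff]
  refine and_congr ((Nat.cast_injective.comp Fin.val_injective).of_comp_iff a).symm ?_
  set d : Fin n → ℤ := fun v => ((a (f v) : ℕ) : ℤ) - ((a v : ℕ) : ℤ)
  calc Function.Injective (fun v => |d v|)
      ↔ Function.Injective (fun v => d v ^ 2) := by
        simp only [Function.Injective, sq_eq_sq_iff_abs_eq_abs]
    _ ↔ Function.Injective (fun v => ((d v ^ 2 : ℤ) : ℚ)) :=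
        (Int.cast_injective.of_comp_iff _).symm
    _ ↔ _ := by simp only [d]; push_cast; rfl

/-- Determinantal Certificate: `n = max_σ |{ |σ f σ⁻¹(i) − i| : i ∈ ℤ_n }|`
holds if and only if any least common multiple (in the UFD
`ℚ[x_0,…,x_{n−1}]`) of the vertex and edge Vandermonde polynomials does
not lie in the ideal generated by the falling factorials. -/
theorem determinantal_certificate (n : ℕ) (f : Fin n → Fin n)
    (L : MvPolynomial (Fin n) ℚ)
    (hdvd₁ : vertexVandermonde n ∣ L)
    (hdvd₂ : edgeVandermonde n f ∣ L)
    (hmin : ∀ M : MvPolynomial (Fin n) ℚ,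
      vertexVandermonde n ∣ M → edgeVandermonde n f ∣ M → L ∣ M) :
    n = gapMax n f ↔ L ∉ fallingIdeal n := by
  have hL : L ∣ vertexVandermonde n * edgeVandermonde n f :=
    hmin _ (dvd_mul_right _ _) (dvd_mul_left _ _)
  rw [eq_gapMax_iff, mem_fallingIdeal_iff, not_forall]
  refine exists_congr fun a => ?_
  rw [isGracefulLabeling_iff_eval_ne_zero]
  exact (map_ne_zero_iff_of_dvd_of_dvd_mul (eval _) hdvd₁ hdvd₂ hL).symm
end

section
/- One inclusion of the stabilizer proposition: For any f ∈ ℤ_n^{ℤ_n} and any permutation σ of ℤ_n with σ ∘ f = f ∘ σ, the polynomial P_f(x) = ∏_{0≤i≠j<n} (x_j − x_i)((x_{f(j)} − x_j)² − (x_{f(i)} − x_i)²) satisfies P_f(x_{σ(0)},...,x_{σ(n−1)}) = P_f(x_0,...,x_{n−1}); that is, Aut(G_f) ⊆ Aut(P_f). -/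
open Finset MvPolynomial

/-- The polynomial
`P_f(x) = ∏_{0 ≤ i ≠ j < n} (x_j − x_i)((x_{f(j)} − x_j)² − (x_{f(i)} − x_i)²)`,
the product ranging over all ordered pairs `(i,j)` with `i ≠ j`. -/
noncomputable def certPoly (n : ℕ) (f : Fin n → Fin n) :
    MvPolynomial (Fin n) ℚ :=
  ∏ p ∈ Finset.univ.filter (fun p : Fin n × Fin n => p.1 ≠ p.2),
    ((X p.2 - X p.1) *
      ((X (f p.2) - X p.2) ^ 2 - (X (f p.1) - X p.1) ^ 2))

/-- One inclusion of the stabilizer proposition: every automorphism of the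
functional directed graph `G_f` stabilizes the polynomial `P_f`, i.e.
`Aut(G_f) ⊆ Aut(P_f)`. -/
theorem aut_graph_subset_aut_certPoly (n : ℕ) (f : Fin n → Fin n)
    (σ : Equiv.Perm (Fin n)) (hσ : ∀ i, σ (f i) = f (σ i)) :
    rename (⇑σ) (certPoly n f) = certPoly n f := by
  unfold certPoly
  rw [map_prod]
  refine Finset.prod_nbij' (fun p => (σ p.1, σ p.2))
    (fun p => (σ.symm p.1, σ.symm p.2)) ?_ ?_ ?_ ?_ ?_
  · intro p hp
    simp only [Finset.mem_filter, Finset.mem_univ, true_and] at hp ⊢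
    exact fun h => hp (σ.injective h)
  · intro p hp
    simp only [Finset.mem_filter, Finset.mem_univ, true_and] at hp ⊢
    exact fun h => hp (σ.symm.injective h)
  · intro p _; simp
  · intro p _; simp
  · intro p _
    simp [map_sub, map_pow, rename_X, hσ]
end

section
/- Existence of a doubling witness: Let n ≥ 2 and suppose g ∈ T_n satisfies n > max_{σ ∈ S_n} |{ |σ(g(σ⁻¹(i))) − i| : i ∈ ℤ_n }|. Then there exists an integer κ with 0 ≤ κ < ⌈log₂(n−1)⌉ such that the function f = g^(2^κ) belongs to T_n and satisfies max_{σ ∈ S_n} |{ |σ(f^(2)(σ⁻¹(i))) − i| : i ∈ ℤ_n }| > max_{σ ∈ S_n} |{ |σ(f(σ⁻¹(i))) − i| : i ∈ ℤ_n }|. -/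
open Finset

lemma exists_incr_aux (a : ℕ → ℕ) : ∀ K, a 0 < a K → ∃ κ < K, a κ < a (κ + 1) := by
  intro K
  induction K with
  | zero => intro h; exact absurd h (lt_irrefl _)
  | succ K ih =>
    intro h
    by_cases hK : a 0 < a K
    · obtain ⟨κ, hκ, hlt⟩ := ih hK
      exact ⟨κ, hκ.trans (Nat.lt_succ_self K), hlt⟩
    · exact ⟨K, Nat.lt_succ_self K, lt_of_le_of_lt (not_lt.1 hK) h⟩

/-- Existence of a doubling witness: if `g ∈ T_n` attains strictly fewer
than `n` distinct induced subtractive edge labels for every relabeling,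
then some iterate `f = g^(2^κ)` with `0 ≤ κ < ⌈log₂(n−1)⌉` belongs to
`T_n` and satisfies
`max_σ |{ |σ f^(2) σ⁻¹(i) − i| }| > max_σ |{ |σ f σ⁻¹(i) − i| }|`. -/

theorem exists_doubling_witness (n : ℕ) (hn : 2 ≤ n) (g : Fin n → Fin n)
    (hT1 : ∀ i, ((g^[n - 1]) i : ℕ) = 0)
    (hT2 : ∀ i : Fin n, (g i : ℕ) ≤ (i : ℕ))
    (hlt : gapMax n g < n) :
    ∃ κ : ℕ, κ < Nat.clog 2 (n - 1) ∧
      (∀ i, (((g^[2 ^ κ])^[n - 1]) i : ℕ) = 0) ∧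
      (∀ i : Fin n, ((g^[2 ^ κ]) i : ℕ) ≤ (i : ℕ)) ∧
      gapMax n (g^[2 ^ κ] ∘ g^[2 ^ κ]) > gapMax n (g^[2 ^ κ]) := by
  have hn0 : 0 < n := lt_of_lt_of_le two_pos hn
  have iter_le : ∀ m (i : Fin n), ((g^[m]) i : ℕ) ≤ i := by
    intro m
    induction m with
    | zero => simp
    | succ m ih =>
      intro i
      rw [Function.iterate_succ_apply']
      exact le_trans (hT2 _) (ih i)
  have gzero : g ⟨0, hn0⟩ = ⟨0, hn0⟩ := Fin.ext (Nat.le_zero.1 (hT2 ⟨0, hn0⟩))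
  have iterzero : ∀ m, g^[m] ⟨0, hn0⟩ = ⟨0, hn0⟩ := by
    intro m
    induction m with
    | zero => rfl
    | succ m ih => rw [Function.iterate_succ_apply, gzero, ih]
  have iter_big : ∀ m, n - 1 ≤ m → ∀ i, g^[m] i = ⟨0, hn0⟩ := by
    intro m hm i
    have hme : m = (m - (n - 1)) + (n - 1) := (Nat.sub_add_cancel hm).symm
    rw [hme, Function.iterate_add_apply]
    have h1 : g^[n - 1] i = ⟨0, hn0⟩ := Fin.ext (hT1 i)
    rw [h1, iterzero]
  have hfull : ∀ f : Fin n → Fin n, (∀ i, f i = ⟨0, hn0⟩) → n ≤ gapMax n f := by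
    intro f hf
    have hle := Finset.le_sup (f := fun σ : Equiv.Perm (Fin n) =>
      (Finset.image
        (fun i : Fin n => |((σ (f (σ.symm i)) : ℕ) : ℤ) - ((i : ℕ) : ℤ)|)
        Finset.univ).card) (Finset.mem_univ (1 : Equiv.Perm (Fin n)))
    refine le_trans ?_ hle
    have heq : (fun i : Fin n =>
        |(((1 : Equiv.Perm (Fin n)) (f ((1 : Equiv.Perm (Fin n)).symm i)) : ℕ) : ℤ)
          - ((i : ℕ) : ℤ)|) = fun i : Fin n => ((i : ℕ) : ℤ) := by
      funext i
      simp only [Equiv.Perm.coe_one, id_eq, Equiv.Perm.one_symm, hf]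
      simp
    rw [heq]
    have hinj : Function.Injective (fun i : Fin n => ((i : ℕ) : ℤ)) := by
      intro i j hij
      exact Fin.ext (Nat.cast_injective hij)
    rw [Finset.card_image_of_injective _ hinj]
    simp
  set K := Nat.clog 2 (n - 1) with hK
  have h2K : n - 1 ≤ 2 ^ K := Nat.le_pow_clog one_lt_two _
  set a : ℕ → ℕ := fun k => gapMax n (g^[2 ^ k]) with ha
  have ha0 : a 0 = gapMax n g := by simp [ha]
  have haK : n ≤ a K := hfull _ (iter_big _ h2K)
  obtain ⟨κ, hκK, hstep⟩ := exists_incr_aux a K (by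
    rw [ha0]; exact lt_of_lt_of_le hlt haK)
  refine ⟨κ, hκK, ?_, iter_le _, ?_⟩
  · intro i
    rw [← Function.iterate_mul]
    have : n - 1 ≤ 2 ^ κ * (n - 1) := Nat.le_mul_of_pos_left _ (pow_pos two_pos κ)
    rw [iter_big _ this i]
  · have hcomp : g^[2 ^ (κ + 1)] = g^[2 ^ κ] ∘ g^[2 ^ κ] := by
      rw [pow_succ, mul_two, Function.iterate_add]
    have := hstep
    rw [ha] at this
    simpa [hcomp] using this
end

section
/- Constancy of nonvanishing lattice evaluations: Let f ∈ ℤ_n^{ℤ_n} and let x = (x_0,...,x_{n−1}) be a point of the integer lattice (ℤ_n)^n, i.e. x_k ∈ {0,...,n−1} for all k. If ∏_{0≤i≠j<n} (x_j − x_i)((x_{f(j)} − x_j)² − (x_{f(i)} − x_i)²) ≠ 0, then this product equals ∏_{0≤i≠j<n} (j − i)(j² − i²). -/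
open Finset

lemma reindex_offdiag {n : ℕ} (σ : Equiv.Perm (Fin n)) (F : Fin n → Fin n → ℤ) :
    (∏ p ∈ Finset.univ.filter (fun p : Fin n × Fin n => p.1 ≠ p.2),
      F (σ p.1) (σ p.2)) =
    ∏ p ∈ Finset.univ.filter (fun p : Fin n × Fin n => p.1 ≠ p.2), F p.1 p.2 := by
  apply Finset.prod_nbij' (fun p => (σ p.1, σ p.2)) (fun p => (σ.symm p.1, σ.symm p.2)) <;>
    simp [Equiv.eq_symm_apply]

/-- Constancy of nonvanishing lattice evaluations: if the evaluation of
`∏_{0 ≤ i ≠ j < n} (x_j − x_i)((x_{f(j)} − x_j)² − (x_{f(i)} − x_i)²)` at a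
lattice point `x ∈ (ℤ_n)^n` is nonzero, then it equals
`∏_{0 ≤ i ≠ j < n} (j − i)(j² − i²)`. -/
theorem constancy_of_nonvanishing_lattice_evaluations (n : ℕ)
    (f : Fin n → Fin n) (x : Fin n → Fin n)
    (hne :
      (∏ p ∈ Finset.univ.filter (fun p : Fin n × Fin n => p.1 ≠ p.2),
        (((x p.2 : ℕ) : ℤ) - ((x p.1 : ℕ) : ℤ)) *
          ((((x (f p.2) : ℕ) : ℤ) - ((x p.2 : ℕ) : ℤ)) ^ 2 -
            (((x (f p.1) : ℕ) : ℤ) - ((x p.1 : ℕ) : ℤ)) ^ 2)) ≠ 0) :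
    (∏ p ∈ Finset.univ.filter (fun p : Fin n × Fin n => p.1 ≠ p.2),
      (((x p.2 : ℕ) : ℤ) - ((x p.1 : ℕ) : ℤ)) *
        ((((x (f p.2) : ℕ) : ℤ) - ((x p.2 : ℕ) : ℤ)) ^ 2 -
          (((x (f p.1) : ℕ) : ℤ) - ((x p.1 : ℕ) : ℤ)) ^ 2)) =
    ∏ p ∈ Finset.univ.filter (fun p : Fin n × Fin n => p.1 ≠ p.2),
      (((p.2 : ℕ) : ℤ) - ((p.1 : ℕ) : ℤ)) *
        (((p.2 : ℕ) : ℤ) ^ 2 - ((p.1 : ℕ) : ℤ) ^ 2) := by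
  rw [Finset.prod_ne_zero_iff] at hne
  -- each factor nonzero
  have hfac : ∀ i j : Fin n, i ≠ j →
      (((x j : ℕ) : ℤ) - ((x i : ℕ) : ℤ)) ≠ 0 ∧
      ((((x (f j) : ℕ) : ℤ) - ((x j : ℕ) : ℤ)) ^ 2 -
        (((x (f i) : ℕ) : ℤ) - ((x i : ℕ) : ℤ)) ^ 2) ≠ 0 := by
    intro i j hij
    have := hne (i, j) (by simp [hij])
    exact mul_ne_zero_iff.mp this
  -- x is injective
  have hxinj : Function.Injective x := by
    intro i j h
    by_contra hij
    exact (hfac i j hij).1 (by rw [h]; ring)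
  let e : Equiv.Perm (Fin n) := Equiv.ofBijective x (Finite.injective_iff_bijective.mp hxinj)
  -- the natAbs function
  have hd : ∀ k : Fin n, ((x (f k) : ℕ) - (x k : ℕ) : ℤ).natAbs < n := by
    intro k
    have h1 : (x (f k) : ℕ) < n := (x (f k)).isLt
    have h2 : (x k : ℕ) < n := (x k).isLt
    omega
  let τ : Fin n → Fin n := fun k => ⟨_, hd k⟩
  have hτsq : ∀ k : Fin n, ((τ k : ℕ) : ℤ) ^ 2 =
      (((x (f k) : ℕ) : ℤ) - ((x k : ℕ) : ℤ)) ^ 2 := by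
    intro k; simpa [τ] using Int.natAbs_sq ((x (f k) : ℕ) - (x k : ℕ) : ℤ)
  have hτinj : Function.Injective τ := by
    intro i j h
    by_contra hij
    apply (hfac i j hij).2
    rw [← hτsq i, ← hτsq j, h]; ring
  let t : Equiv.Perm (Fin n) := Equiv.ofBijective τ (Finite.injective_iff_bijective.mp hτinj)
  have hLHS :
      (∏ p ∈ Finset.univ.filter (fun p : Fin n × Fin n => p.1 ≠ p.2),
        (((x p.2 : ℕ) : ℤ) - ((x p.1 : ℕ) : ℤ)) *
          ((((x (f p.2) : ℕ) : ℤ) - ((x p.2 : ℕ) : ℤ)) ^ 2 -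
            (((x (f p.1) : ℕ) : ℤ) - ((x p.1 : ℕ) : ℤ)) ^ 2)) =
      (∏ p ∈ Finset.univ.filter (fun p : Fin n × Fin n => p.1 ≠ p.2),
        (((x p.2 : ℕ) : ℤ) - ((x p.1 : ℕ) : ℤ))) *
      ∏ p ∈ Finset.univ.filter (fun p : Fin n × Fin n => p.1 ≠ p.2),
        (((τ p.2 : ℕ) : ℤ) ^ 2 - ((τ p.1 : ℕ) : ℤ) ^ 2) := by
    rw [← Finset.prod_mul_distrib]
    exact Finset.prod_congr rfl fun p _ => by rw [hτsq p.1, hτsq p.2]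
  rw [hLHS]
  have h1 : (∏ p ∈ Finset.univ.filter (fun p : Fin n × Fin n => p.1 ≠ p.2),
      (((x p.2 : ℕ) : ℤ) - ((x p.1 : ℕ) : ℤ))) =
      ∏ p ∈ Finset.univ.filter (fun p : Fin n × Fin n => p.1 ≠ p.2),
      (((p.2 : ℕ) : ℤ) - ((p.1 : ℕ) : ℤ)) :=
    reindex_offdiag e (fun i j => ((j : ℕ) : ℤ) - ((i : ℕ) : ℤ))
  have h2 : (∏ p ∈ Finset.univ.filter (fun p : Fin n × Fin n => p.1 ≠ p.2),
      (((τ p.2 : ℕ) : ℤ) ^ 2 - ((τ p.1 : ℕ) : ℤ) ^ 2)) =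
      ∏ p ∈ Finset.univ.filter (fun p : Fin n × Fin n => p.1 ≠ p.2),
      (((p.2 : ℕ) : ℤ) ^ 2 - ((p.1 : ℕ) : ℤ) ^ 2) :=
    reindex_offdiag t (fun i j => ((j : ℕ) : ℤ) ^ 2 - ((i : ℕ) : ℤ) ^ 2)
  rw [h1, h2, ← Finset.prod_mul_distrib]
end

section
/- Vanishing certificate direction: Let f ∈ ℤ_n^{ℤ_n}. If the least common multiple (in ℚ[x_0,...,x_{n−1}]) of ∏_{0≤i<j<n} (x_j − x_i) and ∏_{0≤i<j<n} ((x_{f(j)} − x_j)² − (x_{f(i)} − x_i)²) lies in the ideal J_n generated by the falling factorials (x_k)^↓n, k ∈ ℤ_n, then n > max_{σ ∈ S_n} |{ |σ(f(σ⁻¹(i))) − i| : i ∈ ℤ_n }|. -/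
open Finset MvPolynomial

/-- Vanishing certificate direction: if an lcm of the vertex and edge
Vandermonde polynomials lies in the falling-factorial ideal `J_n`, then
`n > max_σ |{ |σ f σ⁻¹(i) − i| : i ∈ ℤ_n }|`. -/
theorem vanishing_certificate_direction (n : ℕ) (f : Fin n → Fin n)
    (L : MvPolynomial (Fin n) ℚ)
    (hdvd₁ : vertexVandermonde n ∣ L)
    (hdvd₂ : edgeVandermonde n f ∣ L)
    (hmin : ∀ M : MvPolynomial (Fin n) ℚ,
      vertexVandermonde n ∣ M → edgeVandermonde n f ∣ M → L ∣ M)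
    (hmem : L ∈ fallingIdeal n) :
    gapMax n f < n := by
  by_contra hcon
  push_neg at hcon
  -- gapMax ≤ n always
  have hle : gapMax n f ≤ n := by
    refine Finset.sup_le fun σ _ => ?_
    calc (Finset.image _ Finset.univ).card ≤ (Finset.univ : Finset (Fin n)).card :=
          Finset.card_image_le
      _ = n := by simp
  have heq : gapMax n f = n := le_antisymm hle hcon
  -- obtain σ achieving the sup
  obtain ⟨σ, -, hσ⟩ := Finset.exists_mem_eq_sup (Finset.univ : Finset (Equiv.Perm (Fin n)))
    Finset.univ_nonempty (fun σ : Equiv.Perm (Fin n) =>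
      (Finset.image
        (fun i : Fin n => |((σ (f (σ.symm i)) : ℕ) : ℤ) - ((i : ℕ) : ℤ)|)
        Finset.univ).card)
  have hcard : (Finset.image
      (fun i : Fin n => |((σ (f (σ.symm i)) : ℕ) : ℤ) - ((i : ℕ) : ℤ)|)
      Finset.univ).card = n := by
    exact hσ.symm.trans heq
  have hinj : Set.InjOn
      (fun i : Fin n => |((σ (f (σ.symm i)) : ℕ) : ℤ) - ((i : ℕ) : ℤ)|)
      (Finset.univ : Finset (Fin n)) := by
    apply Finset.injOn_of_card_image_eq
    rw [hcard]; simp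
  -- evaluation point
  set v : Fin n → ℚ := fun k => ((σ k : ℕ) : ℚ) with hv
  -- L vanishes at v
  have hLv : MvPolynomial.eval v L = 0 := by
    have : MvPolynomial.eval v L ∈ Ideal.map (MvPolynomial.eval v) (fallingIdeal n) :=
      Ideal.mem_map_of_mem _ hmem
    rw [fallingIdeal, Ideal.map_span] at this
    have hz : ∀ k : Fin n,
        MvPolynomial.eval v (∏ i ∈ Finset.range n, (X k - C (i : ℚ))) = 0 := by
      intro k
      rw [map_prod]
      refine Finset.prod_eq_zero (i := ((σ k : ℕ))) (Finset.mem_range.2 (σ k).isLt) ?_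
      simp [hv]
    have hsub : (MvPolynomial.eval v) '' (Set.range fun k : Fin n =>
        ∏ i ∈ Finset.range n, (X k - C (i : ℚ))) ⊆ ({0} : Set ℚ) := by
      rintro x ⟨y, ⟨k, rfl⟩, rfl⟩
      simp only [Set.mem_singleton_iff]
      exact hz k
    have h2 := Ideal.span_mono hsub this
    rw [show Ideal.span ({0} : Set ℚ) = ⊥ by simp] at h2
    exact Ideal.mem_bot.1 h2
  -- V and E don't vanish at v
  have hVv : MvPolynomial.eval v (vertexVandermonde n) ≠ 0 := by
    rw [vertexVandermonde, map_prod]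
    refine Finset.prod_ne_zero_iff.2 fun p hp => ?_
    simp only [Finset.mem_filter] at hp
    simp only [map_sub, eval_X, hv]
    intro h
    have : ((σ p.2 : ℕ) : ℚ) = ((σ p.1 : ℕ) : ℚ) := by linarith [sub_eq_zero.mp h]
    have : σ p.2 = σ p.1 := by
      apply Fin.ext
      exact_mod_cast this
    exact absurd (σ.injective this) (ne_of_gt hp.2)
  have hEv : MvPolynomial.eval v (edgeVandermonde n f) ≠ 0 := by
    rw [edgeVandermonde, map_prod]
    refine Finset.prod_ne_zero_iff.2 fun p hp => ?_
    simp only [Finset.mem_filter] at hp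
    simp only [map_sub, map_pow, eval_X, hv]
    intro h
    have h' : (((σ (f p.2) : ℕ) : ℚ) - ((σ p.2 : ℕ) : ℚ)) ^ 2
        = (((σ (f p.1) : ℕ) : ℚ) - ((σ p.1 : ℕ) : ℚ)) ^ 2 := by linarith [sub_eq_zero.mp h]
    -- move to ℤ
    have hZ : (((σ (f p.2) : ℕ) : ℤ) - ((σ p.2 : ℕ) : ℤ)) ^ 2
        = (((σ (f p.1) : ℕ) : ℤ) - ((σ p.1 : ℕ) : ℤ)) ^ 2 := by
      have := h'
      exact_mod_cast this
    have habs : |((σ (f p.2) : ℕ) : ℤ) - ((σ p.2 : ℕ) : ℤ)|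
        = |((σ (f p.1) : ℕ) : ℤ) - ((σ p.1 : ℕ) : ℤ)| :=
      (sq_eq_sq_iff_abs_eq_abs _ _).1 hZ
    have h1 : |((σ (f (σ.symm (σ p.2))) : ℕ) : ℤ) - (((σ p.2 : Fin n) : ℕ) : ℤ)|
        = |((σ (f (σ.symm (σ p.1))) : ℕ) : ℤ) - (((σ p.1 : Fin n) : ℕ) : ℤ)| := by
      simpa using habs
    have := hinj (by simp) (by simp) h1
    have : p.2 = p.1 := σ.injective this
    exact (ne_of_gt hp.2) this
  -- L divides V * E
  have hLdvd : L ∣ vertexVandermonde n * edgeVandermonde n f :=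
    hmin _ (dvd_mul_right _ _) (dvd_mul_left _ _)
  obtain ⟨Q, hQ⟩ := hLdvd
  have : MvPolynomial.eval v (vertexVandermonde n * edgeVandermonde n f) = 0 := by
    rw [hQ, map_mul, hLv, zero_mul]
  rw [map_mul] at this
  exact mul_ne_zero hVv hEv this
end
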